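/- arXiv:1506.06286 — 4 statements merged into one kernel-verified Lean document; each statement's English description precedes it below -/
import Mathlib

section
/- Let A = F_q[θ] and let ℓ_n = ∏_{k=1}^{n}(θ − θ^{q^k}), ℓ_0 = 1. Let φ_θ = Σ_{j=0}^r α_j τ^j with α_0 = θ, α_j ∈ A, define a Drinfeld A-module, and let log_φ = Σ_{n≥0} l_n τ^n be its logarithm (determined by log_φ φ_θ = θ log_φ and l_0 = 1). Then for every n ≥ 0 there exists a_n ∈ A with l_n = a_n/ℓ_n. -/
/-!
Multiplying the recursion for `l_n` by `ℓ_{n-1}` and splitting `ℓ_{n-1} = ℓ_j · ∏_{j<k<n} (θ - θ^{q^k})`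
expresses `ℓ_n l_n` as a sum of products of polynomials with the terms `ℓ_j l_j`, `j < n`,
which are polynomials by strong induction. The factors `θ - θ^{q^k}` with `k ≥ 1` are nonzero
because `q^k ≠ 1`, so one may divide by `ℓ_n` in `F_q(θ)`.
-/

open Finset Polynomial

theorem Polynomial.X_sub_X_pow_ne_zero {R : Type*} [Ring R] [Nontrivial R] {m : ℕ} (hm : m ≠ 1) :
    (X - X ^ m : R[X]) ≠ 0 := by
  intro h
  simpa [coeff_X, coeff_X_pow, Ne.symm hm] using congrArg (coeff · 1) h

theorem prod_Icc_one_mul_prod_Icc_succ {M : Type*} [CommMonoid M] (f : ℕ → M) {j m : ℕ}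
    (hjm : j ≤ m) :
    (∏ k ∈ Icc 1 j, f k) * ∏ k ∈ Icc (j + 1) m, f k = ∏ k ∈ Icc 1 m, f k := by
  simp only [Finset.Icc_add_one_left_eq_Ioc]
  exact prod_Ioc_consecutive f (Nat.zero_le j) hjm

theorem prod_Icc_mul_mem_of_recursion {K : Type*} [CommSemiring K] {S : Subsemiring K}
    {D l : ℕ → K} {c : ℕ → ℕ → K} (hD : ∀ n, D n ∈ S) (hc : ∀ n j, c n j ∈ S)
    (h0 : l 0 ∈ S) (hrec : ∀ n, 0 < n → D n * l n = ∑ j ∈ range n, l j * c n j) (n : ℕ) :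
    (∏ k ∈ Icc 1 n, D k) * l n ∈ S := by
  induction n using Nat.strong_induction_on with
  | _ n ih =>
    obtain _ | m := n
    · simpa using h0
    have hsum : (∏ k ∈ Icc 1 (m + 1), D k) * l (m + 1) =
        ∑ j ∈ range (m + 1),
          (∏ k ∈ Icc (j + 1) m, D k) * ((∏ k ∈ Icc 1 j, D k) * l j) * c (m + 1) j := by
      rw [prod_Icc_succ_top (by omega), mul_assoc, hrec (m + 1) m.succ_pos, mul_sum]
      refine sum_congr rfl fun j hj => ?_
      rw [← prod_Icc_one_mul_prod_Icc_succ D (Nat.lt_succ_iff.mp (mem_range.mp hj))]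
      ring
    rw [hsum]
    exact sum_mem fun j hj => mul_mem (mul_mem (prod_mem fun k _ => hD k)
      (ih j (mem_range.mp hj))) (hc _ _)

theorem drinfeld_log_denominators_general (Fq : Type*) [Field Fq] [Fintype Fq]
    (q : ℕ) (hq : q = Fintype.card Fq)
    (α : ℕ → Polynomial Fq)
    (l : ℕ → RatFunc Fq) (hl0 : l 0 = 1)
    (hrec : ∀ n : ℕ, 0 < n →
      algebraMap (Polynomial Fq) (RatFunc Fq)
          (Polynomial.X - Polynomial.X ^ q ^ n) * l n =
        ∑ j ∈ Finset.range n,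
          l j * (algebraMap (Polynomial Fq) (RatFunc Fq) (α (n - j))) ^ q ^ j) :
    ∀ n : ℕ, ∃ a : Polynomial Fq,
      l n = algebraMap (Polynomial Fq) (RatFunc Fq) a /
        algebraMap (Polynomial Fq) (RatFunc Fq)
          (∏ k ∈ Finset.Icc 1 n, (Polynomial.X - Polynomial.X ^ q ^ k)) := by
  intro n
  set f := algebraMap (Polynomial Fq) (RatFunc Fq)
  have hq1 : 1 < q := hq ▸ Fintype.one_lt_card
  obtain ⟨a, ha⟩ := RingHom.mem_rangeS.mp <|
    prod_Icc_mul_mem_of_recursion (S := f.rangeS) (D := fun k => f (X - X ^ q ^ k))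
      (c := fun n j => f (α (n - j)) ^ q ^ j) (fun k => f.mem_rangeS_self _)
      (fun n j => pow_mem (f.mem_rangeS_self _) _) (hl0 ▸ one_mem _) hrec n
  have hℓ : f (∏ k ∈ Icc 1 n, (X - X ^ q ^ k)) ≠ 0 :=
    RatFunc.algebraMap_ne_zero <| prod_ne_zero_iff.mpr fun k hk =>
      X_sub_X_pow_ne_zero (Nat.pow_eq_one.not.mpr (by grind))
  refine ⟨a, (eq_div_iff hℓ).mpr ?_⟩
  rw [ha, map_prod, mul_comm]

/-- Let `φ_θ = Σ_{j=0}^r α_j τ^j` (with `α_0 = θ`, `α_j ∈ A`)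
define a Drinfeld `A`-module, and let `log_φ = Σ l_n τ^n` be its logarithm,
determined by `l_0 = 1` and the recursion
`(θ − θ^{q^n}) l_n = Σ_{j=0}^{n−1} l_j α_{n−j}^{q^j}`.
Then for every `n` there is `a_n ∈ A` with `l_n = a_n / ℓ_n`,
where `ℓ_n = ∏_{k=1}^n (θ − θ^{q^k})`. -/
theorem drinfeld_log_denominators (Fq : Type*) [Field Fq] [Fintype Fq]
    (q : ℕ) (hq : q = Fintype.card Fq)
    (r : ℕ) (α : ℕ → Polynomial Fq)
    (hα0 : α 0 = Polynomial.X) (hαr : ∀ j, r < j → α j = 0)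
    (l : ℕ → RatFunc Fq) (hl0 : l 0 = 1)
    (hrec : ∀ n : ℕ, 0 < n →
      algebraMap (Polynomial Fq) (RatFunc Fq)
          (Polynomial.X - Polynomial.X ^ q ^ n) * l n =
        ∑ j ∈ Finset.range n,
          l j * (algebraMap (Polynomial Fq) (RatFunc Fq) (α (n - j))) ^ q ^ j) :
    ∀ n : ℕ, ∃ a : Polynomial Fq,
      l n = algebraMap (Polynomial Fq) (RatFunc Fq) a /
        algebraMap (Polynomial Fq) (RatFunc Fq)
          (∏ k ∈ Finset.Icc 1 n, (Polynomial.X - Polynomial.X ^ q ^ k)) :=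
  drinfeld_log_denominators_general Fq q hq α l hl0 hrec
end

section
/- For n ≥ q with n = q + r + ℓ(q−1), ℓ ∈ ℕ, r ∈ {0,…,q−2}, the unit u_C(t₁,…,t_n;z) = exp_{φ̃}(𝓛(φ̃)) ∈ A[t₁,…,t_n,z], viewed as a polynomial in θ, has degree n·(q^ℓ−1)/(q−1) − ℓq^ℓ if r = 0, and degree n·(q^{ℓ+1}−1)/(q−1) − (ℓ+1)q^{ℓ+1} if r ≠ 0; moreover its leading coefficient in θ is (−1)^ℓ z^ℓ(1−z) if r = 0, and (−1)^{n(ℓ+1)} z^{ℓ+1} if r ≠ 0. -/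
open Polynomial

section TateAlgebraZ

variable (Fq : Type*) [Field Fq] (n : ℕ)

/- The Tate algebra `T_{n,z}(K_∞)` in the variables `t₁,…,t_n, z` is realized
as the ring of Laurent series in `u = 1/θ` with coefficients in
`F_q[t₁,…,t_n,z] = MvPolynomial (Option (Fin n)) Fq`, where `z` is the
variable indexed by `none` and `t_i` the variable indexed by `some i`. -/

/-- `θ = u⁻¹` inside `T_{n,z}(K_∞)`. -/
noncomputable def thetaTateZ : LaurentSeries (MvPolynomial (Option (Fin n)) Fq) :=
  HahnSeries.single (-1 : ℤ) 1

/-- The embedding of `A = F_q[θ]` into `T_{n,z}(K_∞)`, `a ↦ a(θ)`. -/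
noncomputable def polyToTateZ (a : Polynomial Fq) :
    LaurentSeries (MvPolynomial (Option (Fin n)) Fq) :=
  Polynomial.aeval (thetaTateZ Fq n) a

/-- `b_j(t₁)⋯b_j(t_n)` where `b_j(t) = ∏_{k<j} (t − θ^{q^k})`. -/
noncomputable def tateBProdZ (q j : ℕ) :
    LaurentSeries (MvPolynomial (Option (Fin n)) Fq) :=
  ∏ i : Fin n, ∏ k ∈ Finset.range j,
    (HahnSeries.C (MvPolynomial.X (some i)) - (thetaTateZ Fq n) ^ q ^ k)

/-- `a(t₁)⋯a(t_n)`, for `a ∈ A`. -/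
noncomputable def tateAProdZ (a : Polynomial Fq) :
    LaurentSeries (MvPolynomial (Option (Fin n)) Fq) :=
  ∏ i : Fin n, HahnSeries.C (Polynomial.aeval (MvPolynomial.X (some i)) a)

/-- the variable `z` inside `T_{n,z}(K_∞)`. -/
noncomputable def zTate : LaurentSeries (MvPolynomial (Option (Fin n)) Fq) :=
  HahnSeries.C (MvPolynomial.X none)

end TateAlgebraZ

/-!
Expand `u_C(θ) = exp_{φ̃}(𝓛(φ̃))` as a Laurent series in `1/θ` whose `(j, a)`-term is
`b_j(t₁)⋯b_j(t_n) · a(t₁)⋯a(t_n) · z^{j + deg a} / (D_j a^{q^j})`. Since `D_j` and `a` are monic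
and every factor `t − θ^{q^k}` of `b_j(t)` has leading coefficient `−1`, this term has order
`(j + deg a) q^j − n (q^j − 1)/(q − 1)` in `1/θ` and leading coefficient
`(−1)^{nj} a(t₁)⋯a(t_n) z^{j + deg a}`.

For `n = q + r + ℓ(q − 1)`, going from `j` to `j + 1` changes `j q^j − n (q^j − 1)/(q − 1)` by
`q^j ((j − ℓ)(q − 1) − r)`. Hence the order is minimal exactly for `a = 1` and `j = ℓ + 1`, or
also `j = ℓ` when `r = 0`. The degree of `u_C` is minus this minimal order and its leading
coefficient is the sum of the leading coefficients of the minimal terms. For `r = 0` that sum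
simplifies because `(−1)^n = −1` in `F_q`.
-/

open HahnSeries

namespace HahnSeries

theorem order_eq_of_coeff_ne_zero {Γ R : Type*} [LinearOrder Γ] [Zero Γ] [Zero R]
    {x : HahnSeries Γ R} {o : Γ} (ho : x.coeff o ≠ 0) (h : ∀ g < o, x.coeff g = 0) :
    x.order = o :=
  le_antisymm (order_le_of_coeff_ne_zero ho)
    ((le_order_iff_forall (ne_zero_of_coeff_ne_zero ho)).2 h)

theorem leadingCoeff_C {Γ R : Type*} [AddCommMonoid Γ] [PartialOrder Γ]
    [IsOrderedCancelAddMonoid Γ] [Semiring R] (r : R) :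
    (C r : HahnSeries Γ R).leadingCoeff = r := by
  rw [C_apply, leadingCoeff_of_single]

variable {Γ R ι : Type*} [AddCommMonoid Γ] [LinearOrder Γ] [IsOrderedCancelAddMonoid Γ]
  [CommRing R] [IsDomain R]

theorem order_prod {s : Finset ι} {f : ι → HahnSeries Γ R} (hf : ∀ i ∈ s, f i ≠ 0) :
    (∏ i ∈ s, f i).order = ∑ i ∈ s, (f i).order := by
  classical
  induction s using Finset.induction_on with
  | empty => simp
  | insert a s ha ih =>
    have hs : ∀ i ∈ s, f i ≠ 0 := fun i hi => hf i (Finset.mem_insert_of_mem hi)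
    rw [Finset.prod_insert ha, Finset.sum_insert ha,
      order_mul (hf a (Finset.mem_insert_self a s)) (Finset.prod_ne_zero_iff.2 hs), ih hs]

theorem leadingCoeff_prod (s : Finset ι) (f : ι → HahnSeries Γ R) :
    (∏ i ∈ s, f i).leadingCoeff = ∏ i ∈ s, (f i).leadingCoeff := by
  classical
  induction s using Finset.induction_on with
  | empty => simp [leadingCoeff_one]
  | insert a s ha ih => rw [Finset.prod_insert ha, Finset.prod_insert ha, leadingCoeff_mul, ih]

end HahnSeries

section AevalSingleNegOne

variable {S R : Type*} [CommRing S] [CommRing R] [Algebra S R]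

theorem coeff_aeval_single_neg_one (p : S[X]) (k : ℕ) :
    (aeval (single (-1 : ℤ) (1 : R)) p).coeff (-k) = algebraMap S R (p.coeff k) := by
  induction p using Polynomial.induction_on' with
  | add p q hp hq => simp [hp, hq]
  | monomial m c =>
    rw [aeval_monomial, single_pow, one_pow, HahnSeries.algebraMap_apply',
      PowerSeries.algebraMap_apply, ofPowerSeries_C, C_mul_eq_smul, HahnSeries.coeff_smul,
      coeff_single, coeff_monomial]
    split_ifs <;> simp_all

variable [FaithfulSMul S R]

theorem order_aeval_single_neg_one {p : S[X]} (hp : p ≠ 0) :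
    (aeval (single (-1 : ℤ) (1 : R)) p).order = -p.natDegree := by
  refine order_eq_of_coeff_ne_zero ?_ fun g hg => ?_
  · rw [coeff_aeval_single_neg_one, coeff_natDegree, Ne,
      map_eq_zero_iff _ (FaithfulSMul.algebraMap_injective S R)]
    exact Polynomial.leadingCoeff_ne_zero.2 hp
  · obtain ⟨k, rfl⟩ : ∃ k : ℕ, g = -k := ⟨(-g).toNat, by omega⟩
    rw [coeff_aeval_single_neg_one, coeff_eq_zero_of_natDegree_lt (by omega), map_zero]

theorem leadingCoeff_aeval_single_neg_one (p : S[X]) :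
    (aeval (single (-1 : ℤ) (1 : R)) p).leadingCoeff = algebraMap S R p.leadingCoeff := by
  rcases eq_or_ne p 0 with rfl | hp
  · simp
  · rw [leadingCoeff_eq, order_aeval_single_neg_one hp, coeff_aeval_single_neg_one,
      Polynomial.leadingCoeff]

end AevalSingleNegOne

section CSubSingleNegOnePow

variable {R : Type*} [CommRing R]

theorem coeff_C_sub_single_neg_one_pow (t : R) (e : ℕ) (g : ℤ) :
    (HahnSeries.C t - single (-1 : ℤ) (1 : R) ^ e).coeff g =
      (if g = 0 then t else 0) - if g = -e then 1 else 0 := by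
  simp only [single_pow, HahnSeries.coeff_sub, coeff_single, one_pow]
  split_ifs <;> simp_all

variable [Nontrivial R]

theorem C_sub_single_neg_one_pow_ne_zero (t : R) {e : ℕ} (he : 1 ≤ e) :
    HahnSeries.C t - single (-1 : ℤ) (1 : R) ^ e ≠ 0 :=
  ne_zero_of_coeff_ne_zero (g := -e) <| by
    rw [coeff_C_sub_single_neg_one_pow]
    simp [show (-e : ℤ) ≠ 0 by omega]

theorem order_C_sub_single_neg_one_pow (t : R) {e : ℕ} (he : 1 ≤ e) :
    (HahnSeries.C t - single (-1 : ℤ) (1 : R) ^ e).order = -(e : ℤ) := by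
  refine order_eq_of_coeff_ne_zero ?_ fun g hg => ?_ <;> rw [coeff_C_sub_single_neg_one_pow]
  · simp [show (-e : ℤ) ≠ 0 by omega]
  · simp [show g ≠ 0 by omega, show g ≠ -e by omega]

theorem leadingCoeff_C_sub_single_neg_one_pow (t : R) {e : ℕ} (he : 1 ≤ e) :
    (HahnSeries.C t - single (-1 : ℤ) (1 : R) ^ e).leadingCoeff = -1 := by
  rw [leadingCoeff_eq, order_C_sub_single_neg_one_pow t he, coeff_C_sub_single_neg_one_pow]
  simp [show (-e : ℤ) ≠ 0 by omega]

end CSubSingleNegOnePow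

theorem carlitzD_monic_and_natDegree {Fq : Type*} [Field Fq] {q : ℕ} (hq : 1 < q)
    {D : ℕ → Fq[X]} (hD0 : D 0 = 1) (hD : ∀ i, D (i + 1) = (X ^ q ^ (i + 1) - X) * D i ^ q)
    (j : ℕ) : (D j).Monic ∧ (D j).natDegree = j * q ^ j := by
  induction j with
  | zero => simp [hD0]
  | succ i ih =>
    have hmonic : (X ^ q ^ (i + 1) - X : Fq[X]).Monic :=
      monic_X_pow_sub (by rw [degree_X]; exact_mod_cast Nat.one_lt_pow (Nat.add_one_ne_zero i) hq)
    rw [hD i]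
    refine ⟨hmonic.mul (ih.1.pow q), ?_⟩
    rw [hmonic.natDegree_mul (ih.1.pow q),
      FiniteField.X_pow_card_pow_sub_X_natDegree_eq Fq (Nat.add_one_ne_zero i) hq, natDegree_pow,
      ih.2]
    ring

/-- The valuation `v_∞` of `b_j(t₁)⋯b_j(t_n) τ^j(𝓛(φ̃)) / D_j`,
i.e. `j q^j − n (q^j − 1)/(q − 1)`. -/
def expTermOrder (q n j : ℕ) : ℤ := j * q ^ j - n * ∑ k ∈ Finset.range j, (q : ℤ) ^ k

section TateAlgebra

variable {Fq : Type*} [Field Fq] {n : ℕ}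

theorem zTate_pow_eq_C (e : ℕ) :
    zTate Fq n ^ e =
      HahnSeries.C ((MvPolynomial.X none : MvPolynomial (Option (Fin n)) Fq) ^ e) :=
  (map_pow _ _ _).symm

theorem tateAProdZ_eq_C (a : Fq[X]) :
    tateAProdZ Fq n a =
      HahnSeries.C (∏ i : Fin n, aeval (MvPolynomial.X (some i) : MvPolynomial _ Fq) a) :=
  (map_prod _ _ _).symm

theorem tateAProdZ_ne_zero {a : Fq[X]} (ha : a ≠ 0) : tateAProdZ Fq n a ≠ 0 := by
  rw [tateAProdZ_eq_C, Ne, map_eq_zero_iff _ HahnSeries.C_injective]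
  exact Finset.prod_ne_zero_iff.2 fun i _ =>
    (transcendental_iff_injective.1 (MvPolynomial.transcendental_X Fq _)).ne_iff' (map_zero _)
      |>.2 ha

theorem tateBProdZ_ne_zero_and_order_and_leadingCoeff {q : ℕ} (hq : 0 < q) (j : ℕ) :
    tateBProdZ Fq n q j ≠ 0 ∧
      (tateBProdZ Fq n q j).order = -(n * ∑ k ∈ Finset.range j, (q : ℤ) ^ k) ∧
      (tateBProdZ Fq n q j).leadingCoeff = (-1) ^ (n * j) := by
  have hexp : ∀ k, 1 ≤ q ^ k := fun k => Nat.one_le_pow _ _ hq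
  have hfactor : ∀ (i : Fin n) (k : ℕ),
      HahnSeries.C (MvPolynomial.X (some i)) - thetaTateZ Fq n ^ q ^ k ≠ 0 := fun i k =>
    C_sub_single_neg_one_pow_ne_zero (MvPolynomial.X (some i)) (hexp k)
  have hrow : ∀ i : Fin n, ∏ k ∈ Finset.range j,
      (HahnSeries.C (MvPolynomial.X (some i)) - thetaTateZ Fq n ^ q ^ k) ≠ 0 := fun i =>
    Finset.prod_ne_zero_iff.2 fun k _ => hfactor i k
  rw [tateBProdZ]
  refine ⟨Finset.prod_ne_zero_iff.2 fun i _ => hrow i, ?_, ?_⟩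
  · simp_rw [HahnSeries.order_prod fun i _ => hrow i, HahnSeries.order_prod fun k _ => hfactor _ k]
    simp only [thetaTateZ, order_C_sub_single_neg_one_pow, hexp]
    simp [Finset.mul_sum]
  · simp_rw [HahnSeries.leadingCoeff_prod]
    simp only [thetaTateZ, leadingCoeff_C_sub_single_neg_one_pow, hexp]
    simp [pow_mul']

theorem expTerm_ne_zero_and_order_and_leadingCoeff {q j : ℕ} (hq : 0 < q) {d a : Fq[X]}
    (hd : d.Monic) (hdeg : d.natDegree = j * q ^ j) (ha : a.Monic)
    {x : LaurentSeries (MvPolynomial (Option (Fin n)) Fq)}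
    (hx : polyToTateZ Fq n d * polyToTateZ Fq n a ^ q ^ j * x =
      tateBProdZ Fq n q j * tateAProdZ Fq n a * zTate Fq n ^ (j + a.natDegree)) :
    x ≠ 0 ∧ x.order = expTermOrder q n j + a.natDegree * q ^ j ∧
      x.leadingCoeff = (-1) ^ (n * j) * (∏ i : Fin n, aeval (MvPolynomial.X (some i)) a) *
        MvPolynomial.X none ^ (j + a.natDegree) := by
  have hP : (d * a ^ q ^ j).Monic := hd.mul (ha.pow _)
  have hPdeg : (d * a ^ q ^ j).natDegree = (j + a.natDegree) * q ^ j := by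
    rw [hd.natDegree_mul (ha.pow _), hdeg, natDegree_pow]
    ring
  rw [polyToTateZ, polyToTateZ, ← map_pow, ← map_mul, thetaTateZ] at hx
  have hP0 :
      aeval (single (-1 : ℤ) (1 : MvPolynomial (Option (Fin n)) Fq)) (d * a ^ q ^ j) ≠ 0 := by
    rw [← HahnSeries.leadingCoeff_ne_zero, leadingCoeff_aeval_single_neg_one, hP.leadingCoeff,
      map_one]
    exact one_ne_zero
  obtain ⟨hB0, hBo, hBl⟩ := tateBProdZ_ne_zero_and_order_and_leadingCoeff (Fq := Fq) (n := n) hq j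
  have hBA0 : tateBProdZ Fq n q j * tateAProdZ Fq n a ≠ 0 :=
    mul_ne_zero hB0 (tateAProdZ_ne_zero ha.ne_zero)
  have hz0 : zTate Fq n ^ (j + a.natDegree) ≠ 0 :=
    pow_ne_zero _ ((map_ne_zero_iff _ HahnSeries.C_injective).2 (MvPolynomial.X_ne_zero _))
  have hx0 : x ≠ 0 := by
    rintro rfl
    rw [mul_zero] at hx
    exact mul_ne_zero hBA0 hz0 hx.symm
  refine ⟨hx0, ?_, ?_⟩
  · have h := congrArg HahnSeries.order hx
    rw [order_mul hP0 hx0, order_mul hBA0 hz0, order_mul hB0 (right_ne_zero_of_mul hBA0),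
      order_aeval_single_neg_one hP.ne_zero, hPdeg, hBo, tateAProdZ_eq_C, zTate_pow_eq_C,
      order_C, order_C] at h
    rw [expTermOrder]
    push_cast at h
    linarith
  · have h := congrArg HahnSeries.leadingCoeff hx
    simpa only [HahnSeries.leadingCoeff_mul, leadingCoeff_aeval_single_neg_one, hP.leadingCoeff,
      map_one, one_mul, hBl, tateAProdZ_eq_C, zTate_pow_eq_C, HahnSeries.leadingCoeff_C] using h

end TateAlgebra

section ExpTermOrder

variable {q n r ℓ : ℕ}

theorem expTermOrder_succ (hq : 0 < q) (hn : n = q + r + ℓ * (q - 1)) (j : ℕ) :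
    expTermOrder q n (j + 1) = expTermOrder q n j + q ^ j * (((j : ℤ) - ℓ) * (q - 1) - r) := by
  subst hn
  simp only [expTermOrder, Finset.sum_range_succ]
  push_cast [Nat.cast_sub hq]
  ring

theorem expTermOrder_succ_self (hq : 0 < q) (hn : n = q + r + ℓ * (q - 1)) :
    expTermOrder q n (ℓ + 1) = expTermOrder q n ℓ - r * q ^ ℓ := by
  rw [expTermOrder_succ hq hn]
  ring

theorem expTermOrder_strictAntiOn (hq : 2 ≤ q) (hn : n = q + r + ℓ * (q - 1)) :
    StrictAntiOn (expTermOrder q n) (Set.Iic ℓ) := by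
  refine strictAntiOn_of_succ_lt Set.ordConnected_Iic fun j _ _ hj => ?_
  rw [Order.succ_eq_add_one, Set.mem_Iic] at hj
  rw [Order.succ_eq_add_one, expTermOrder_succ (by omega) hn]
  have : ((j : ℤ) - ℓ) * (q - 1) - r < 0 := by
    nlinarith [show (j : ℤ) + 1 ≤ ℓ by exact_mod_cast hj, show (2 : ℤ) ≤ q by exact_mod_cast hq]
  nlinarith [pow_pos (show (0 : ℤ) < q by omega) j]

theorem expTermOrder_strictMonoOn (hq : 2 ≤ q) (hr : r ≤ q - 2)
    (hn : n = q + r + ℓ * (q - 1)) :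
    StrictMonoOn (expTermOrder q n) (Set.Ici (ℓ + 1)) := by
  refine strictMonoOn_of_lt_succ Set.ordConnected_Ici fun j _ hj _ => ?_
  rw [Set.mem_Ici] at hj
  rw [Order.succ_eq_add_one, expTermOrder_succ (by omega) hn]
  have : 0 < ((j : ℤ) - ℓ) * (q - 1) - r := by
    nlinarith [show (ℓ : ℤ) + 1 ≤ j by exact_mod_cast hj, show (r : ℤ) + 2 ≤ q by omega]
  nlinarith [pow_pos (show (0 : ℤ) < q by omega) j]

theorem expTermOrder_lt (hq : 2 ≤ q) (hr : r ≤ q - 2) (hn : n = q + r + ℓ * (q - 1)) {j : ℕ}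
    (hj : j ≠ ℓ + 1) (hjr : r = 0 → j ≠ ℓ) :
    expTermOrder q n (ℓ + 1) < expTermOrder q n j := by
  have hstep := expTermOrder_succ_self (by omega) hn
  rcases lt_trichotomy j ℓ with hjℓ | rfl | hjℓ
  · have := expTermOrder_strictAntiOn hq hn (Set.mem_Iic.2 hjℓ.le) (Set.mem_Iic.2 le_rfl) hjℓ
    have : (0 : ℤ) ≤ r * q ^ ℓ := by positivity
    linarith
  · have : (0 : ℤ) < r * q ^ j := by
      have := Nat.pos_of_ne_zero fun h => hjr h rfl
      positivity
    linarith
  · exact expTermOrder_strictMonoOn hq hr hn (Set.mem_Ici.2 le_rfl) (Set.mem_Ici.2 hjℓ)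
      (by omega)

end ExpTermOrder

theorem neg_one_pow_card_add_mul_card_sub_one (Fq A : Type*) [Field Fq] [Fintype Fq] [Ring A]
    [Algebra Fq A] (ℓ : ℕ) :
    (-1 : A) ^ (Fintype.card Fq + ℓ * (Fintype.card Fq - 1)) = -1 := by
  have h : (-1 : Fq) ^ (Fintype.card Fq + ℓ * (Fintype.card Fq - 1)) = -1 := by
    rw [_root_.pow_add, pow_mul',
      FiniteField.pow_card_sub_one_eq_one _ (neg_ne_zero.2 one_ne_zero), one_pow, mul_one,
      FiniteField.pow_card]
  simpa using congrArg (algebraMap Fq A) h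

section ExpLog

variable {Fq : Type*} [Field Fq] {n q : ℕ}

theorem hsum_order_and_leadingCoeff (hq : 0 < q) {D : ℕ → Fq[X]} (hDm : ∀ j, (D j).Monic)
    (hDdeg : ∀ j, (D j).natDegree = j * q ^ j)
    (G : SummableFamily ℤ (MvPolynomial (Option (Fin n)) Fq) (ℕ × Fq[X]))
    (hG : ∀ (j : ℕ) (a : Fq[X]), a.Monic →
      polyToTateZ Fq n (D j) * (polyToTateZ Fq n a) ^ q ^ j * G (j, a) =
        tateBProdZ Fq n q j * tateAProdZ Fq n a * (zTate Fq n) ^ (j + a.natDegree))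
    (hG' : ∀ (j : ℕ) (a : Fq[X]), ¬ a.Monic → G (j, a) = 0)
    {m : ℕ} {M : Finset ℕ} (hMeq : ∀ j ∈ M, expTermOrder q n j = expTermOrder q n m)
    (hM : ∀ j ∉ M, expTermOrder q n m < expTermOrder q n j)
    (hc : ∑ j ∈ M, (-1) ^ (n * j) *
      (MvPolynomial.X none : MvPolynomial (Option (Fin n)) Fq) ^ j ≠ 0) :
    G.hsum.order = expTermOrder q n m ∧
      G.hsum.leadingCoeff = ∑ j ∈ M, (-1) ^ (n * j) * MvPolynomial.X none ^ j := by
  have hterm := fun j a (ha : Monic a) =>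
    expTerm_ne_zero_and_order_and_leadingCoeff hq (hDm j) (hDdeg j) ha (hG j a ha)
  have hqpow : ∀ j, (0 : ℤ) < q ^ j := fun j => pow_pos (by omega) j
  have hmin : ∀ j, expTermOrder q n m ≤ expTermOrder q n j := fun j => by
    by_cases hj : j ∈ M
    exacts [(hMeq j hj).ge, (hM j hj).le]
  have hlow : ∀ o < expTermOrder q n m, G.hsum.coeff o = 0 := fun o ho => by
    rw [SummableFamily.coeff_hsum]
    refine finsum_eq_zero_of_forall_eq_zero fun ⟨j, a⟩ => ?_
    by_cases ha : a.Monic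
    · refine coeff_eq_zero_of_lt_order (ho.trans_le ?_)
      rw [(hterm j a ha).2.1]
      nlinarith [hmin j, Nat.zero_le a.natDegree, hqpow j]
    · rw [hG' j a ha, HahnSeries.coeff_zero]
  have hsupp : {p | (G p).coeff (expTermOrder q n m) ≠ 0} ⊆ ↑(M ×ˢ {(1 : Fq[X])}) := by
    rintro ⟨j, a⟩ hp
    have ha : a.Monic := by
      by_contra ha
      exact hp (by rw [hG' j a ha, HahnSeries.coeff_zero])
    have hle := order_le_of_coeff_ne_zero hp
    rw [(hterm j a ha).2.1] at hle
    have hjM : j ∈ M := by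
      by_contra hj
      nlinarith [hM j hj, Nat.zero_le a.natDegree, hqpow j]
    have hdeg : a.natDegree = 0 := by
      have : (a.natDegree : ℤ) * q ^ j ≤ 0 := by linarith [hMeq j hjM]
      exact_mod_cast le_antisymm (nonpos_of_mul_nonpos_left this (hqpow j)) (Nat.cast_nonneg _)
    simp [hjM, ha.natDegree_eq_zero.1 hdeg]
  have hcoeff : G.hsum.coeff (expTermOrder q n m) =
      ∑ j ∈ M, (-1) ^ (n * j) * MvPolynomial.X none ^ j := by
    rw [SummableFamily.coeff_hsum_eq_sum_of_subset hsupp, Finset.sum_product]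
    refine Finset.sum_congr rfl fun j hj => ?_
    obtain ⟨-, hord, hlead⟩ := hterm j 1 monic_one
    rw [Finset.sum_singleton, ← hMeq j hj, ← add_zero (expTermOrder q n j)]
    simp_all [leadingCoeff_eq]
  have hord := order_eq_of_coeff_ne_zero (hcoeff ▸ hc) hlow
  exact ⟨hord, by rw [leadingCoeff_eq, hord, hcoeff]⟩

theorem natDegree_and_leadingCoeff_of_expTermOrder (hq : 2 ≤ q) {D : ℕ → Fq[X]}
    (hDm : ∀ j, (D j).Monic) (hDdeg : ∀ j, (D j).natDegree = j * q ^ j)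
    (G : SummableFamily ℤ (MvPolynomial (Option (Fin n)) Fq) (ℕ × Fq[X]))
    (hG : ∀ (j : ℕ) (a : Fq[X]), a.Monic →
      polyToTateZ Fq n (D j) * (polyToTateZ Fq n a) ^ q ^ j * G (j, a) =
        tateBProdZ Fq n q j * tateAProdZ Fq n a * (zTate Fq n) ^ (j + a.natDegree))
    (hG' : ∀ (j : ℕ) (a : Fq[X]), ¬ a.Monic → G (j, a) = 0)
    {u : (MvPolynomial (Option (Fin n)) Fq)[X]} (hu : aeval (thetaTateZ Fq n) u = G.hsum)
    (m : ℕ) (M : Finset ℕ) (hMeq : ∀ j ∈ M, expTermOrder q n j = expTermOrder q n m)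
    (hM : ∀ j ∉ M, expTermOrder q n m < expTermOrder q n j)
    (hc : ∑ j ∈ M, (-1) ^ (n * j) *
      (MvPolynomial.X none : MvPolynomial (Option (Fin n)) Fq) ^ j ≠ 0) :
    u.natDegree = n * ((q ^ m - 1) / (q - 1)) - m * q ^ m ∧
      u.leadingCoeff = ∑ j ∈ M, (-1) ^ (n * j) * MvPolynomial.X none ^ j := by
  obtain ⟨hord, hlead⟩ := hsum_order_and_leadingCoeff (by omega) hDm hDdeg G hG hG' hMeq hM hc
  rw [thetaTateZ] at hu
  have hu0 : u ≠ 0 := by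
    rintro rfl
    rw [map_zero] at hu
    rw [← hu, HahnSeries.leadingCoeff_zero] at hlead
    exact hc hlead.symm
  refine ⟨?_, by rw [← hlead, ← hu, leadingCoeff_aeval_single_neg_one, Algebra.algebraMap_self,
    RingHom.id_apply]⟩
  have hdeg := order_aeval_single_neg_one (R := MvPolynomial (Option (Fin n)) Fq) hu0
  rw [hu, hord, expTermOrder] at hdeg
  have : n * ∑ k ∈ Finset.range m, q ^ k = u.natDegree + m * q ^ m := by
    zify
    linarith
  rw [← Nat.geomSum_eq hq]
  omega

end ExpLog

theorem unit_uC_degree_and_leading_coeff_general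
    (Fq : Type*) [Field Fq] [Fintype Fq]
    (q : ℕ) (hq : q = Fintype.card Fq)
    (n r ℓ : ℕ) (hr : r ≤ q - 2) (hnrl : n = q + r + ℓ * (q - 1))
    (D : ℕ → Polynomial Fq) (hD0 : D 0 = 1)
    (hD : ∀ i : ℕ, D (i + 1) =
      (Polynomial.X ^ q ^ (i + 1) - Polynomial.X) * (D i) ^ q)
    (G : HahnSeries.SummableFamily ℤ (MvPolynomial (Option (Fin n)) Fq)
      (ℕ × Polynomial Fq))
    (hG : ∀ (j : ℕ) (a : Polynomial Fq), a.Monic →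
      polyToTateZ Fq n (D j) * (polyToTateZ Fq n a) ^ q ^ j * G (j, a) =
        tateBProdZ Fq n q j * tateAProdZ Fq n a *
          (zTate Fq n) ^ (j + a.natDegree))
    (hG' : ∀ (j : ℕ) (a : Polynomial Fq), ¬ a.Monic → G (j, a) = 0)
    (u : Polynomial (MvPolynomial (Option (Fin n)) Fq))
    (hu : Polynomial.aeval (thetaTateZ Fq n) u = G.hsum) :
    (r = 0 →
      u.natDegree = n * ((q ^ ℓ - 1) / (q - 1)) - ℓ * q ^ ℓ ∧
        u.leadingCoeff =
          (-1) ^ ℓ * (MvPolynomial.X none) ^ ℓ * (1 - MvPolynomial.X none)) ∧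
    (r ≠ 0 →
      u.natDegree = n * ((q ^ (ℓ + 1) - 1) / (q - 1)) - (ℓ + 1) * q ^ (ℓ + 1) ∧
        u.leadingCoeff =
          (-1) ^ (n * (ℓ + 1)) * (MvPolynomial.X none) ^ (ℓ + 1)) := by
  have hq2 : 2 ≤ q := hq ▸ Fintype.one_lt_card
  obtain ⟨hDm, hDdeg⟩ := forall_and.1 (carlitzD_monic_and_natDegree hq2 hD0 hD)
  have key := natDegree_and_leadingCoeff_of_expTermOrder hq2 hDm hDdeg G hG hG' hu
  refine ⟨fun hr0 => ?_, fun hr0 => ?_⟩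
  · have hflat : expTermOrder q n (ℓ + 1) = expTermOrder q n ℓ := by
      simp [expTermOrder_succ_self (by omega) hnrl, hr0]
    have hsign : (-1 : MvPolynomial (Option (Fin n)) Fq) ^ n = -1 := by
      rw [hnrl, hr0, add_zero, hq]
      exact neg_one_pow_card_add_mul_card_sub_one Fq _ ℓ
    have hsum : ∑ j ∈ {ℓ, ℓ + 1}, (-1) ^ (n * j) * (MvPolynomial.X none) ^ j =
        (-1) ^ ℓ * (MvPolynomial.X none) ^ ℓ *
          (1 - MvPolynomial.X none : MvPolynomial (Option (Fin n)) Fq) := by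
      rw [Finset.sum_pair (by omega), pow_mul, pow_mul, hsign]
      ring
    rw [← hsum]
    refine key ℓ {ℓ, ℓ + 1} (by simp [hflat]) (fun j hj => ?_) ?_
    · simp only [Finset.mem_insert, Finset.mem_singleton, not_or] at hj
      exact hflat ▸ expTermOrder_lt hq2 hr hnrl hj.2 fun _ => hj.1
    · rw [hsum]
      refine mul_ne_zero (by simp) (sub_ne_zero.2 fun h => ?_)
      simpa using congrArg MvPolynomial.constantCoeff h
  · rw [← Finset.sum_singleton (fun j => (-1) ^ (n * j) * MvPolynomial.X none ^ j) (ℓ + 1)]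
    refine key (ℓ + 1) {ℓ + 1} (by simp)
      (fun j hj => expTermOrder_lt hq2 hr hnrl (by simpa using hj) (absurd · hr0)) ?_
    simp

/-- For `n ≥ q`, write `n = q + r + ℓ(q−1)` with `ℓ ∈ ℕ`,
`r ∈ {0,…,q−2}`.  The unit `u_C(t₁,…,t_n;z) = exp_{φ̃}(𝓛(φ̃)) ∈ A[t₁,…,t_n,z]`
(where `φ̃_θ = (t₁−θ)⋯(t_n−θ)zτ + θ`,
`exp_{φ̃} = Σ_j b_j(t₁)⋯b_j(t_n) z^j τ^j / D_j`, and
`𝓛(φ̃) = Σ_{a monic} a(t₁)⋯a(t_n) z^{deg a}/a`), viewed as a polynomial in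
`θ`, has degree `n(q^ℓ−1)/(q−1) − ℓq^ℓ` if `r = 0` and degree
`n(q^{ℓ+1}−1)/(q−1) − (ℓ+1)q^{ℓ+1}` if `r ≠ 0`; moreover its leading
coefficient in `θ` is `(−1)^ℓ z^ℓ (1−z)` if `r = 0`, and
`(−1)^{n(ℓ+1)} z^{ℓ+1}` if `r ≠ 0`.

Here `exp_{φ̃}(𝓛(φ̃))` is the sum of the summable family with terms
`b_j(t₁)⋯b_j(t_n)·a(t₁)⋯a(t_n)·z^{j+deg a}/(D_j·a^{q^j})` (`j ≥ 0`, `a`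
monic), and `u` is the polynomial in `θ` over `F_q[t₁,…,t_n,z]` representing
this sum. -/
theorem unit_uC_degree_and_leading_coeff
    (Fq : Type*) [Field Fq] [Fintype Fq]
    (q : ℕ) (hq : q = Fintype.card Fq)
    (n r ℓ : ℕ) (hn : q ≤ n) (hr : r ≤ q - 2) (hnrl : n = q + r + ℓ * (q - 1))
    (D : ℕ → Polynomial Fq) (hD0 : D 0 = 1)
    (hD : ∀ i : ℕ, D (i + 1) =
      (Polynomial.X ^ q ^ (i + 1) - Polynomial.X) * (D i) ^ q)
    (G : HahnSeries.SummableFamily ℤ (MvPolynomial (Option (Fin n)) Fq)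
      (ℕ × Polynomial Fq))
    (hG : ∀ (j : ℕ) (a : Polynomial Fq), a.Monic →
      polyToTateZ Fq n (D j) * (polyToTateZ Fq n a) ^ q ^ j * G (j, a) =
        tateBProdZ Fq n q j * tateAProdZ Fq n a *
          (zTate Fq n) ^ (j + a.natDegree))
    (hG' : ∀ (j : ℕ) (a : Polynomial Fq), ¬ a.Monic → G (j, a) = 0)
    (u : Polynomial (MvPolynomial (Option (Fin n)) Fq))
    (hu : Polynomial.aeval (thetaTateZ Fq n) u = G.hsum) :
    (r = 0 →
      u.natDegree = n * ((q ^ ℓ - 1) / (q - 1)) - ℓ * q ^ ℓ ∧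
        u.leadingCoeff =
          (-1) ^ ℓ * (MvPolynomial.X none) ^ ℓ * (1 - MvPolynomial.X none)) ∧
    (r ≠ 0 →
      u.natDegree = n * ((q ^ (ℓ + 1) - 1) / (q - 1)) - (ℓ + 1) * q ^ (ℓ + 1) ∧
        u.leadingCoeff =
          (-1) ^ (n * (ℓ + 1)) * (MvPolynomial.X none) ^ (ℓ + 1)) :=
  unit_uC_degree_and_leading_coeff_general Fq q hq n r ℓ hr hnrl D hD0 hD G hG hG' u hu
end

section
/- Let n ≥ 2, A = F_q[θ], and φ the canonical deformation of a rank-r Drinfeld module over A[t₁,…,t_n]. Write φ_{θ^k} = Σ_{j=0}^{k}[θ^k, j]τ^j with [θ^k,j] ∈ A[t₁,…,t_n]. Then deg_θ[θ^k,j] = q^j(k−j) + n(q^j −1)/(q−1), and the leading coefficient of [θ^k,j] as a polynomial in θ lies in F_q^×; in particular deg_θ[θ^k,k] > deg_θ[θ^k,j] for 0 ≤ j ≤ k−1. -/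
/-!
Writing `d k j = deg_θ [θ^k,j]`, the recursion `[θ^{k+1},j+1] = θ·[θ^k,j+1] + f·τ[θ^k,j]` has a
second summand of degree `n + q·d k j`, which exceeds the degree `1 + d k (j+1)` of the first one
as soon as `q^{j+1} > 1`. Hence degrees and leading coefficients propagate from that summand
alone: `d (k+1) (j+1) = n + q·d k j` and the leading coefficient of `[θ^k,j]` is
`lc(f)^j = ±1`. Solving the degree recursion gives `d k j = q^j(k-j) + n(1 + q + ⋯ + q^{j-1})`;
then `d k k - d k j = n(q^j + ⋯ + q^{k-1}) - q^j(k-j) ≥ (n-1)(k-j)q^j > 0` once `n ≥ 2`.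
-/

open Polynomial Finset

namespace Polynomial

variable {R ι : Type*} [CommRing R]

lemma prod_C_sub_X_eq (s : Finset ι) (a : ι → R) :
    ∏ i ∈ s, (C (a i) - X) = C ((-1) ^ #s) * ∏ i ∈ s, (X - C (a i)) := by
  simp_rw [← neg_sub X, prod_neg, map_pow, map_neg, map_one]

lemma natDegree_prod_C_sub_X [Nontrivial R] (s : Finset ι) (a : ι → R) :
    (∏ i ∈ s, (C (a i) - X)).natDegree = #s := by
  rw [prod_C_sub_X_eq, natDegree_C_mul_of_isUnit ((isUnit_neg_one).pow _),
    natDegree_prod_of_monic _ _ fun i _ => monic_X_sub_C (a i)]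
  simp

lemma leadingCoeff_prod_C_sub_X (s : Finset ι) (a : ι → R) :
    (∏ i ∈ s, (C (a i) - X)).leadingCoeff = (-1) ^ #s := by
  rw [prod_C_sub_X_eq, leadingCoeff_C_mul_of_isUnit ((isUnit_neg_one).pow _),
    (monic_prod_X_sub_C a s).leadingCoeff, mul_one]

end Polynomial

namespace CanonicalDeformation

/-- The predicted `θ`-degree of `[θ^k,j]` when `deg_θ f = n`. -/
def coeffDegree (q n k j : ℕ) : ℕ :=
  q ^ j * (k - j) + n * ∑ i ∈ range j, q ^ i

lemma add_coeffDegree_mul (q n k j : ℕ) :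
    n + coeffDegree q n k j * q = coeffDegree q n (k + 1) (j + 1) := by
  simp only [coeffDegree, Nat.add_sub_add_right, geom_sum_succ]
  ring

lemma one_add_coeffDegree_lt {q : ℕ} (hq : 1 < q) (n : ℕ) {k j : ℕ} (hjk : j + 1 ≤ k) :
    1 + coeffDegree q n k (j + 1) < coeffDegree q n (k + 1) (j + 1) := by
  obtain ⟨m, rfl⟩ := Nat.exists_eq_add_of_le hjk
  have hQ : 1 < q ^ (j + 1) := Nat.one_lt_pow (Nat.succ_ne_zero j) hq
  simp only [coeffDegree, show j + 1 + m + 1 - (j + 1) = m + 1 by omega,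
    show j + 1 + m - (j + 1) = m by omega, mul_add, mul_one]
  omega

lemma geom_sum_add_mul_le {q : ℕ} (hq : 0 < q) (j m : ℕ) :
    ∑ i ∈ range j, q ^ i + q ^ j * m ≤ ∑ i ∈ range (j + m), q ^ i := by
  rw [sum_range_add]
  gcongr
  calc q ^ j * m = ∑ _i ∈ range m, q ^ j := by simp [mul_comm]
    _ ≤ ∑ i ∈ range m, q ^ (j + i) :=
      sum_le_sum fun i _ => Nat.pow_le_pow_right hq (Nat.le_add_right j i)

lemma coeffDegree_lt_coeffDegree_self {q n : ℕ} (hq : 0 < q) (hn : 2 ≤ n) {k j : ℕ}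
    (hjk : j < k) : coeffDegree q n k j < coeffDegree q n k k := by
  obtain ⟨m, rfl⟩ := Nat.exists_eq_add_of_lt hjk
  have hpos : 0 < q ^ j * (m + 1) := Nat.mul_pos (pow_pos hq j) m.succ_pos
  have hsum := geom_sum_add_mul_le hq j (m + 1)
  simp only [coeffDegree, Nat.sub_self, mul_zero, zero_add,
    show j + m + 1 - j = m + 1 by omega] at hsum ⊢
  rw [← add_assoc] at hsum
  calc q ^ j * (m + 1) + n * ∑ i ∈ range j, q ^ i
      < n * (q ^ j * (m + 1)) + n * ∑ i ∈ range j, q ^ i :=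
        Nat.add_lt_add_right (lt_mul_of_one_lt_left hpos (by omega)) _
    _ ≤ n * ∑ i ∈ range (j + m + 1), q ^ i := by
        rw [← mul_add, add_comm]; exact Nat.mul_le_mul_left n hsum

variable {R : Type*} [CommRing R]

/-- `h k j` is the coefficient `[θ^k,j]` of `τ^j` in `φ_{θ^k}` for `φ_θ = θ + f τ`, where `θ` is
the variable `X` and `τ` acts on `R[X]` as `expand R q` (that is, `θ ↦ θ^q`). -/
structure IsPowCoeffs (f : R[X]) (q : ℕ) (h : ℕ → ℕ → R[X]) : Prop where
  zero_zero : h 0 0 = 1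
  zero_succ : ∀ j, h 0 (j + 1) = 0
  succ_zero : ∀ k, h (k + 1) 0 = X * h k 0
  succ_succ : ∀ k j, h (k + 1) (j + 1) = X * h k (j + 1) + f * expand R q (h k j)

namespace IsPowCoeffs

variable {f : R[X]} {q : ℕ} {h : ℕ → ℕ → R[X]}

lemma eq_zero_of_lt (H : IsPowCoeffs f q h) {k j : ℕ} (hkj : k < j) : h k j = 0 := by
  induction k generalizing j with
  | zero =>
    obtain ⟨j, rfl⟩ := Nat.exists_eq_succ_of_ne_zero (Nat.ne_zero_of_lt hkj)
    exact H.zero_succ j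
  | succ k ih =>
    obtain ⟨j, rfl⟩ := Nat.exists_eq_succ_of_ne_zero (Nat.ne_zero_of_lt hkj)
    rw [H.succ_succ, ih (by omega), ih (by omega), mul_zero, map_zero, mul_zero, add_zero]

theorem natDegree_eq_and_leadingCoeff_eq [IsDomain R] (H : IsPowCoeffs f q h) (hf : f ≠ 0)
    (hq : 1 < q) {k j : ℕ} (hjk : j ≤ k) :
    (h k j).natDegree = coeffDegree q f.natDegree k j ∧
      (h k j).leadingCoeff = f.leadingCoeff ^ j := by
  induction k generalizing j with
  | zero =>
    obtain rfl : j = 0 := Nat.le_zero.mp hjk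
    simp [H.zero_zero, coeffDegree]
  | succ k ih =>
    have hne {j : ℕ} (hjk : j ≤ k) : h k j ≠ 0 := by
      rw [← leadingCoeff_ne_zero, (ih hjk).2]
      exact pow_ne_zero _ (leadingCoeff_ne_zero.mpr hf)
    cases j with
    | zero =>
      obtain ⟨hd, hl⟩ := ih (Nat.zero_le k)
      rw [H.succ_zero, natDegree_X_mul (hne k.zero_le), hd, leadingCoeff_mul, leadingCoeff_X,
        one_mul, hl]
      simp [coeffDegree]
    | succ j =>
      obtain ⟨hd, hl⟩ := ih (Nat.le_of_succ_le_succ hjk)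
      set B := f * expand R q (h k j)
      have hBd : B.natDegree = coeffDegree q f.natDegree (k + 1) (j + 1) := by
        rw [natDegree_mul hf ((expand_ne_zero (by omega)).mpr (hne (by omega))),
          natDegree_expand, hd, add_coeffDegree_mul]
      have hBl : B.leadingCoeff = f.leadingCoeff ^ (j + 1) := by
        rw [leadingCoeff_mul, leadingCoeff_expand (by omega), hl, pow_succ']
      rw [H.succ_succ]
      rcases Nat.lt_or_ge j k with hjk' | hkj
      · have hlt : (X * h k (j + 1)).natDegree < B.natDegree := by
          calc (X * h k (j + 1)).natDegree ≤ 1 + (h k (j + 1)).natDegree :=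
                natDegree_mul_le.trans (Nat.add_le_add_right natDegree_X_le _)
            _ < B.natDegree := by rw [(ih hjk').1, hBd]; exact one_add_coeffDegree_lt hq _ hjk'
        rw [natDegree_add_eq_right_of_natDegree_lt hlt,
          leadingCoeff_add_of_degree_lt (degree_lt_degree hlt)]
        exact ⟨hBd, hBl⟩
      · obtain rfl : j = k := by omega
        rw [H.eq_zero_of_lt (Nat.lt_succ_self j), mul_zero, zero_add]
        exact ⟨hBd, hBl⟩

end IsPowCoeffs

end CanonicalDeformation

open CanonicalDeformation in
/-- Let `n ≥ 2`, `A = F_q[θ]`, and let `φ` be the canonical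
deformation of the Carlitz module over `A[t₁,…,t_n]`:
`φ_θ = (t₁−θ)⋯(t_n−θ)τ + θ`.  Writing `φ_{θ^k} = Σ_{j=0}^k [θ^k,j] τ^j` with
`[θ^k,j] ∈ A[t₁,…,t_n]` (the recursion being
`[θ^{k+1},j+1] = θ·[θ^k,j+1] + (t₁−θ)⋯(t_n−θ)·τ([θ^k,j])`, where `τ` acts on
`A[t₁,…,t_n]` by `θ ↦ θ^q`), one has
`deg_θ [θ^k,j] = q^j(k−j) + n(q^j−1)/(q−1)`, the leading coefficient of
`[θ^k,j]` as a polynomial in `θ` lies in `F_q^×`, and in particular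
`deg_θ [θ^k,k] > deg_θ [θ^k,j]` for `0 ≤ j ≤ k−1`. -/
theorem canonical_deformation_coeff_degrees
    (Fq : Type*) [Field Fq] [Fintype Fq]
    (q : ℕ) (hq : q = Fintype.card Fq)
    (n : ℕ) (hn : 2 ≤ n)
    (f : Polynomial (MvPolynomial (Fin n) Fq))
    (hf : f = ∏ i : Fin n, (Polynomial.C (MvPolynomial.X i) - Polynomial.X))
    (h : ℕ → ℕ → Polynomial (MvPolynomial (Fin n) Fq))
    (h00 : h 0 0 = 1)
    (h0 : ∀ j : ℕ, h 0 (j + 1) = 0)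
    (hrec0 : ∀ k : ℕ, h (k + 1) 0 = Polynomial.X * h k 0)
    (hrec : ∀ k j : ℕ, h (k + 1) (j + 1) =
      Polynomial.X * h k (j + 1) + f * ((h k j).comp (Polynomial.X ^ q))) :
    (∀ k j : ℕ, j ≤ k →
        (h k j).natDegree = q ^ j * (k - j) + n * ((q ^ j - 1) / (q - 1)) ∧
        ∃ c : Fq, c ≠ 0 ∧ (h k j).leadingCoeff = MvPolynomial.C c) ∧
      (∀ k j : ℕ, j < k → (h k j).natDegree < (h k k).natDegree) := by
  have hq1 : 1 < q := hq ▸ Fintype.one_lt_card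
  have hfd : f.natDegree = n := by rw [hf, natDegree_prod_C_sub_X, card_univ, Fintype.card_fin]
  have hfl : f.leadingCoeff = MvPolynomial.C ((-1) ^ n) := by
    rw [hf, leadingCoeff_prod_C_sub_X, card_univ, Fintype.card_fin, map_pow, map_neg, map_one]
  have hf0 : f ≠ 0 := leadingCoeff_ne_zero.mp (by simp [hfl])
  have H : IsPowCoeffs f q h := ⟨h00, h0, hrec0, hrec⟩
  have key {k j : ℕ} (hjk : j ≤ k) := H.natDegree_eq_and_leadingCoeff_eq hf0 hq1 hjk
  refine ⟨fun k j hjk => ⟨?_, ((-1) ^ n) ^ j, by simp, by rw [(key hjk).2, hfl, ← map_pow]⟩,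
    fun k j hjk => ?_⟩
  · rw [(key hjk).1, hfd, coeffDegree, Nat.geomSum_eq hq1]
  · rw [(key hjk.le).1, (key le_rfl).1, hfd]
    exact coeffDegree_lt_coeffDegree_self (by omega) hn hjk
end

section
/- Let φ be a Drinfeld A-module over O_L (the integral closure of A = F_q[θ] in a finite extension L/K), with z-deformation φ̃_θ = Σ_j z^j α_j τ^j where φ_θ = Σ_j α_j τ^j. Then the Taelman-type class module H(φ̃/O_L[z]) = T_z(L_∞)/(O_L[z] + exp_{φ̃}(T_z(L_∞))) is a finitely generated torsion F_q[z]-module; in particular the multiplication-by-z map on H(φ̃/O_L[z]) is injective. -/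
/-! Since `exp_{φ̃}(t) ≡ t (mod z)` and `exp_{φ̃}(t)` vanishes in the class module `H`, every class
is divisible by `z`, i.e. `H = z H`. As `H` is finitely generated, Nakayama's lemma gives an
`r ≡ 1 (mod z)` killing `H`; such an `r` is nonzero, so `H` is torsion. A surjective endomorphism
of a finitely generated module over a commutative ring is injective (Vasconcelos), so
multiplication by `z` is injective. -/

open Function

section

variable {R M : Type*} [CommRing R] [AddCommGroup M] [Module R M]

theorem Submodule.smul_surjective_quotient_of_forall_sub_self_eq_smul {N : Submodule R M}
    (E : M →ₗ[R] M) (hE : LinearMap.range E ≤ N) (x : R)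
    (hEx : ∀ t : M, ∃ t' : M, E t - t = x • t') :
    Surjective (fun h : M ⧸ N => x • h) := by
  intro h
  obtain ⟨t, rfl⟩ := N.mkQ_surjective h
  obtain ⟨t', ht'⟩ := hEx t
  refine ⟨N.mkQ (-t'), ?_⟩
  have hEt : N.mkQ (E t) = 0 := (N.mkQ_apply _).trans <|
    (Submodule.Quotient.mk_eq_zero N).mpr (hE ⟨t, rfl⟩)
  calc x • N.mkQ (-t') = N.mkQ (t - E t) := by
        rw [← map_smul, smul_neg, ← ht', neg_sub]
    _ = N.mkQ t := by rw [map_sub, hEt, sub_zero]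

theorem Module.isTorsion_of_smul_surjective [IsDomain R] [Module.Finite R M] {x : R}
    (hx : ¬IsUnit x) (hsurj : Surjective (fun m : M => x • m)) : Module.IsTorsion R M := by
  have hle : (⊤ : Submodule R M) ≤ Ideal.span {x} • ⊤ := by
    rintro m -
    obtain ⟨m', rfl⟩ := hsurj m
    exact Submodule.smul_mem_smul (Ideal.mem_span_singleton_self x) trivial
  obtain ⟨r, hr1, hr⟩ := Submodule.exists_sub_one_mem_and_smul_eq_zero_of_fg_of_le_smul
    (Ideal.span {x}) ⊤ (Module.Finite.fg_top (R := R)) hle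
  have hr0 : r ≠ 0 := by
    rintro rfl
    rw [zero_sub] at hr1
    exact hx (Ideal.span_singleton_eq_top.mp (Ideal.eq_top_of_isUnit_mem _ hr1 isUnit_one.neg))
  exact fun m => ⟨⟨r, mem_nonZeroDivisors_of_ne_zero hr0⟩, hr m trivial⟩

end

theorem class_module_of_z_deformation_is_torsion_general
    (Fq : Type*) [Field Fq]
    (T : Type*) [CommRing T] [Algebra (Polynomial Fq) T]
    (OLz : Submodule (Polynomial Fq) T)
    (E : T →ₗ[Polynomial Fq] T)
    (hmodz : ∀ t : T, ∃ t' : T,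
      E t - t = algebraMap (Polynomial Fq) T Polynomial.X * t')
    (hfg : Module.Finite (Polynomial Fq) (T ⧸ (OLz ⊔ LinearMap.range E))) :
    Module.Finite (Polynomial Fq) (T ⧸ (OLz ⊔ LinearMap.range E)) ∧
    Module.IsTorsion (Polynomial Fq) (T ⧸ (OLz ⊔ LinearMap.range E)) ∧
    Function.Injective (fun h : T ⧸ (OLz ⊔ LinearMap.range E) =>
      (Polynomial.X : Polynomial Fq) • h) := by
  have hsurj := Submodule.smul_surjective_quotient_of_forall_sub_self_eq_smul E (le_sup_right (a := OLz))
    Polynomial.X (by simpa only [Algebra.smul_def] using hmodz)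
  exact ⟨hfg, Module.isTorsion_of_smul_surjective Polynomial.not_isUnit_X hsurj,
    OrzechProperty.injective_of_surjective_endomorphism (LinearMap.lsmul _ _ Polynomial.X) hsurj⟩

/-- Let `φ` be a Drinfeld `A`-module over `O_L` with
`z`-deformation `φ̃` (`φ̃_θ = Σ_j z^j α_j τ^j`).  Then the Taelman-type class
module `H(φ̃/O_L[z]) = T_z(L_∞)/(O_L[z] + exp_{φ̃}(T_z(L_∞)))` is a finitely
generated torsion `F_q[z]`-module; in particular multiplication by `z` is
injective on `H(φ̃/O_L[z])`.

We axiomatize the analytic setting: `T` stands for the Tate algebra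
`T_z(L_∞)`, an algebra over `F_q[z] = Polynomial Fq` (the variable `z` acting
through `algebraMap`), `OLz` for the `F_q[z]`-submodule `O_L[z]` of `T`, and
`E` for `exp_{φ̃}`, an `F_q[z]`-linear endomorphism of `T`.  The key facts,
which may be assumed (cf. the context), are the congruence
`exp_{φ̃}(x) ≡ x (mod z)` and the finite generation of the quotient over
`F_q[z]`. -/
theorem class_module_of_z_deformation_is_torsion
    (Fq : Type*) [Field Fq] [Fintype Fq]
    (T : Type*) [CommRing T] [Algebra (Polynomial Fq) T]
    (OLz : Submodule (Polynomial Fq) T)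
    (E : T →ₗ[Polynomial Fq] T)
    (hmodz : ∀ t : T, ∃ t' : T,
      E t - t = algebraMap (Polynomial Fq) T Polynomial.X * t')
    (hfg : Module.Finite (Polynomial Fq) (T ⧸ (OLz ⊔ LinearMap.range E))) :
    Module.Finite (Polynomial Fq) (T ⧸ (OLz ⊔ LinearMap.range E)) ∧
    Module.IsTorsion (Polynomial Fq) (T ⧸ (OLz ⊔ LinearMap.range E)) ∧
    Function.Injective (fun h : T ⧸ (OLz ⊔ LinearMap.range E) =>
      (Polynomial.X : Polynomial Fq) • h) :=
  class_module_of_z_deformation_is_torsion_general Fq T OLz E hmodz hfg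
end
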